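/- Let G_ℕ be the complete directed graph on the vertex set ℕ (all edges, including self-loops) and let W = {(σ_k)_{k≥1} ∈ ℕ^ω : for every n ≥ 1 there exists k ≥ 1 with (σ_k, σ_{k+1}) = (n, n+1)}. In the Banach–Mazur game (G_ℕ, 0, W), Player 0 has a bounded move-counting winning strategy (namely h(v,n) = the two-step path n, n+1), but Player 0 has no positional winning strategy. -/

import Mathlib

open MeasureTheory
open scoped ENNReal NNReal

namespace BMGame

variable {V : Type*}

/-- The prefix of length `n` of the infinite sequence `ρ`. -/
def pref (ρ : ℕ → V) (n : ℕ) : List V := (List.range n).map ρ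

/-- `ρ` is an infinite path of the graph `E` starting at `v₀`. -/
def IsPlay (E : V → V → Prop) (v₀ : V) (ρ : ℕ → V) : Prop :=
  ρ 0 = v₀ ∧ ∀ n, E (ρ n) (ρ (n + 1))

/-- `π` is a nonempty finite path of the graph `E` starting at `v₀` (a position of the game). -/
def IsPos (E : V → V → Prop) (v₀ : V) (π : List V) : Prop :=
  π.head? = some v₀ ∧ π.Chain' E

/-- A strategy for player 0 assigns to each position the (nonempty) block of vertices
appended by player 0's move; `(π ++ f π).Chain' E` says that this block is a path
starting at the last vertex of `π`. -/
def IsStrategy (E : V → V → Prop) (v₀ : V) (f : List V → List V) : Prop :=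
  ∀ π, IsPos E v₀ π → f π ≠ [] ∧ (π ++ f π).Chain' E

/-- The play `ρ` is consistent with the strategy `f`: there are cut points
`c 0, c 1, …` (the lengths of the prefixes built after each move of player 1) such that
after each such prefix player 0 plays according to `f`, and player 1 then appends a
nonempty block. -/
def ConsGen (f : List V → List V) (ρ : ℕ → V) : Prop :=
  ∃ c : ℕ → ℕ, 1 ≤ c 0 ∧ ∀ i,
    pref ρ (c i + (f (pref ρ (c i))).length) = pref ρ (c i) ++ f (pref ρ (c i)) ∧
    c i + (f (pref ρ (c i))).length < c (i + 1)

/-- `f` is a winning strategy for player 0 in the Banach–Mazur game `(E, v₀, W)`. -/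
def WinningStrategy (E : V → V → Prop) (v₀ : V) (W : Set (ℕ → V))
    (f : List V → List V) : Prop :=
  IsStrategy E v₀ f ∧ ∀ ρ, IsPlay E v₀ ρ → ConsGen f ρ → ρ ∈ W

/-- The strategy `f` is `b`-bounded: each of its moves has length at most `b`. -/
def BoundedBy (E : V → V → Prop) (v₀ : V) (b : ℕ) (f : List V → List V) : Prop :=
  ∀ π, IsPos E v₀ π → (f π).length ≤ b

/-- A positional strategy assigns to each vertex the nonempty block appended. -/
def IsPositional (E : V → V → Prop) (f : V → List V) : Prop :=
  ∀ v, f v ≠ [] ∧ (v :: f v).Chain' E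

/-- Consistency with a positional strategy: after each prefix chosen by player 1,
player 0 plays `f` of the current (last) vertex. -/
def ConsPositional (f : V → List V) (ρ : ℕ → V) : Prop :=
  ∃ c : ℕ → ℕ, 1 ≤ c 0 ∧ ∀ i,
    pref ρ (c i + (f (ρ (c i - 1))).length) = pref ρ (c i) ++ f (ρ (c i - 1)) ∧
    c i + (f (ρ (c i - 1))).length < c (i + 1)

def PositionalWinning (E : V → V → Prop) (v₀ : V) (W : Set (ℕ → V)) (f : V → List V) : Prop :=
  IsPositional E f ∧ ∀ ρ, IsPlay E v₀ ρ → ConsPositional f ρ → ρ ∈ W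

/-- Structural requirement shared by move-counting and length-counting strategies:
for `n ≥ 1`, `h v n` is a nonempty block forming a path from `v`. -/
def IsCountingStrategy (E : V → V → Prop) (h : V → ℕ → List V) : Prop :=
  ∀ v n, 1 ≤ n → h v n ≠ [] ∧ (v :: h v n).Chain' E

/-- Consistency with a move-counting strategy: at its `i`-th move (`i ≥ 1`) player 0 plays
`h (current vertex) i`. -/
def ConsMoveCounting (h : V → ℕ → List V) (ρ : ℕ → V) : Prop :=
  ∃ c : ℕ → ℕ, 1 ≤ c 0 ∧ ∀ i,
    pref ρ (c i + (h (ρ (c i - 1)) (i + 1)).length) = pref ρ (c i) ++ h (ρ (c i - 1)) (i + 1) ∧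
    c i + (h (ρ (c i - 1)) (i + 1)).length < c (i + 1)

def MoveCountingWinning (E : V → V → Prop) (v₀ : V) (W : Set (ℕ → V))
    (h : V → ℕ → List V) : Prop :=
  IsCountingStrategy E h ∧ ∀ ρ, IsPlay E v₀ ρ → ConsMoveCounting h ρ → ρ ∈ W

/-- Consistency with a length-counting strategy: after a prefix of length `c i`
player 0 plays `h (current vertex) (c i)`. -/
def ConsLengthCounting (h : V → ℕ → List V) (ρ : ℕ → V) : Prop :=
  ∃ c : ℕ → ℕ, 1 ≤ c 0 ∧ ∀ i,
    pref ρ (c i + (h (ρ (c i - 1)) (c i)).length) = pref ρ (c i) ++ h (ρ (c i - 1)) (c i) ∧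
    c i + (h (ρ (c i - 1)) (c i)).length < c (i + 1)

def LengthCountingWinning (E : V → V → Prop) (v₀ : V) (W : Set (ℕ → V))
    (h : V → ℕ → List V) : Prop :=
  IsCountingStrategy E h ∧ ∀ ρ, IsPlay E v₀ ρ → ConsLengthCounting h ρ → ρ ∈ W

/-- The segment `ρ a, ρ (a+1), …, ρ (b-1)` of an infinite sequence. -/
def seg (ρ : ℕ → V) (a b : ℕ) : List V := (List.range (b - a)).map fun j => ρ (a + j)

/-- A last-move strategy is defined on all nonempty finite paths of the graph. -/
def IsLastMove (E : V → V → Prop) (g : List V → List V) : Prop :=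
  ∀ π, π ≠ [] → π.Chain' E → g π ≠ [] ∧ (π ++ g π).Chain' E

/-- Consistency with the last-move strategy `g`: the play decomposes as
`π₁ g(π₁) π₂ g(π₂) ⋯` where the `πᵢ` are the (nonempty) moves of player 1. -/
def ConsLastMove (g : List V → List V) (ρ : ℕ → V) : Prop :=
  ∃ s e : ℕ → ℕ, s 0 = 0 ∧ (∀ i, s i < e i) ∧ ∀ i,
    seg ρ (e i) (e i + (g (seg ρ (s i) (e i))).length) = g (seg ρ (s i) (e i)) ∧
    s (i + 1) = e i + (g (seg ρ (s i) (e i))).length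

def LastMoveWinning (E : V → V → Prop) (v₀ : V) (W : Set (ℕ → V)) (g : List V → List V) : Prop :=
  IsLastMove E g ∧ ∀ ρ, IsPlay E v₀ ρ → ConsLastMove g ρ → ρ ∈ W

/-- The cylinder generated by the finite word `π`. -/
def Cyl (π : List V) : Set (ℕ → V) := {ρ | pref ρ π.length = π}

/-- One-step transition probabilities obtained from the weights `w`. -/
noncomputable def transP [Fintype V] (E : V → V → Prop) (w : V → V → ℝ≥0) (u v : V) : ℝ≥0∞ := by
  classical
  exact if E u v then
    (w u v : ℝ≥0∞) / ∑ x ∈ Finset.univ.filter (fun x => E u x), (w u x : ℝ≥0∞)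
  else 0

/-- The probability of the cylinder generated by a finite word: the product of the
one-step transition probabilities along it. -/
noncomputable def pathP [Fintype V] (E : V → V → Prop) (w : V → V → ℝ≥0) (π : List V) : ℝ≥0∞ :=
  ((π.zip π.tail).map fun q => transP E w q.1 q.2).prod

/-- `P` is the reasonable probability measure associated with the weights `w`. -/
def IsReasonable [Fintype V] [MeasurableSpace (ℕ → V)] (E : V → V → Prop) (v₀ : V)
    (w : V → V → ℝ≥0) (P : Measure (ℕ → V)) : Prop :=
  IsProbabilityMeasure P ∧ ∀ π : List V, π.head? = some v₀ → P (Cyl π) = pathP E w π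

/-- `Ps` is a legal move of player 0 in the generalised game `G_α` at position `π`: a
finite nonempty set of nonempty finite paths from the last vertex of `π` whose union of
cylinders has conditional probability at least `α` given `Cyl π`. -/
def LegalProposal [MeasurableSpace (ℕ → V)] (E : V → V → Prop) (P : Measure (ℕ → V)) (α : ℝ)
    (π : List V) (Ps : Finset (List V)) : Prop :=
  Ps.Nonempty ∧ (∀ τ ∈ Ps, τ ≠ [] ∧ (π ++ τ).Chain' E) ∧
    ENNReal.ofReal α ≤ P (⋃ τ ∈ Ps, Cyl (π ++ τ)) / P (Cyl π)

/-- An α-strategy for player 0. -/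
def IsAlphaStrategy [MeasurableSpace (ℕ → V)] (E : V → V → Prop) (v₀ : V) (P : Measure (ℕ → V))
    (α : ℝ) (f : List V → Finset (List V)) : Prop :=
  ∀ π, IsPos E v₀ π → LegalProposal E P α π (f π)

/-- Consistency with an α-strategy: at each stage, player 1 picks some element of the
set proposed by player 0 and appends a nonempty block after it. -/
def ConsAlpha (f : List V → Finset (List V)) (ρ : ℕ → V) : Prop :=
  ∃ c : ℕ → ℕ, 1 ≤ c 0 ∧ ∀ i, ∃ τ ∈ f (pref ρ (c i)),
    pref ρ (c i + τ.length) = pref ρ (c i) ++ τ ∧ c i + τ.length < c (i + 1)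

def AlphaWinning [MeasurableSpace (ℕ → V)] (E : V → V → Prop) (v₀ : V) (P : Measure (ℕ → V))
    (α : ℝ) (W : Set (ℕ → V)) (f : List V → Finset (List V)) : Prop :=
  IsAlphaStrategy E v₀ P α f ∧ ∀ ρ, IsPlay E v₀ ρ → ConsAlpha f ρ → ρ ∈ W

/-- A strategy for player 1 in the generalised game `G_α` consists of an initial path and,
for each position together with a legal proposal of player 0, the selected element of the
proposal and the next (nonempty) block played by player 1. -/
def IsP1Strategy [MeasurableSpace (ℕ → V)] (E : V → V → Prop) (v₀ : V) (P : Measure (ℕ → V))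
    (α : ℝ) (init : List V) (g : List V → Finset (List V) → List V × List V) : Prop :=
  IsPos E v₀ init ∧
    ∀ π Ps, IsPos E v₀ π → LegalProposal E P α π Ps →
      (g π Ps).1 ∈ Ps ∧ (g π Ps).2 ≠ [] ∧ (π ++ ((g π Ps).1 ++ (g π Ps).2)).Chain' E

/-- Consistency of a play with player 1's strategy `(init, g)`:
there is a sequence of legal proposals of player 0 generating the play. -/
def ConsP1 [MeasurableSpace (ℕ → V)] (E : V → V → Prop) (P : Measure (ℕ → V)) (α : ℝ)
    (init : List V) (g : List V → Finset (List V) → List V × List V) (ρ : ℕ → V) : Prop :=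
  ∃ (Ps : ℕ → Finset (List V)) (p : ℕ → List V), p 0 = init ∧
    (∀ n, pref ρ (p n).length = p n) ∧
    ∀ n, LegalProposal E P α (p n) (Ps n) ∧
      p (n + 1) = p n ++ ((g (p n) (Ps n)).1 ++ (g (p n) (Ps n)).2)

def P1Winning [MeasurableSpace (ℕ → V)] (E : V → V → Prop) (v₀ : V) (P : Measure (ℕ → V))
    (α : ℝ) (W : Set (ℕ → V)) (init : List V)
    (g : List V → Finset (List V) → List V × List V) : Prop :=
  IsP1Strategy E v₀ P α init g ∧ ∀ ρ, IsPlay E v₀ ρ → ConsP1 E P α init g ρ → ρ ∉ W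

/-- A union of cylinders, i.e. an open subset of the space of sequences. -/
def IsCylOpen (U : Set (ℕ → V)) : Prop :=
  ∃ S : Set (List V), U = ⋃ π ∈ S, Cyl π

/-- `W` is a countable intersection of open subsets of the space `Paths (G, v₀)`. -/
def IsCountableInterOfOpens (E : V → V → Prop) (v₀ : V) (W : Set (ℕ → V)) : Prop :=
  ∃ U : ℕ → Set (ℕ → V), (∀ n, IsCylOpen (U n)) ∧
    W = {ρ | IsPlay E v₀ ρ} ∩ ⋂ n, U n

/-- For every `n`, the concatenation of the blocks `u 0, …, u (n-1)` is a prefix of `ρ`. -/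
def AgreesWithBlocks (ρ : ℕ → V) (u : ℕ → List V) : Prop :=
  ∀ n, pref ρ (((List.range n).map u).flatten).length = ((List.range n).map u).flatten

end BMGame

open BMGame

/-- The complete directed graph on `ℕ` (all edges, including self-loops). -/
def EN : ℕ → ℕ → Prop := fun _ _ => True

/-- The set of sequences over `ℕ` such that for every `n ≥ 1` there is `k ≥ 1` with
`(σ_k, σ_{k+1}) = (n, n + 1)` (sequences are `0`-indexed, `σ_i = ρ (i - 1)`). -/
def W19 : Set (ℕ → ℕ) :=
  {ρ | ∀ n : ℕ, 1 ≤ n → ∃ k : ℕ, ρ k = n ∧ ρ (k + 1) = n + 1}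


/-!
Playing the two-vertex path `n, n + 1` at its `n`-th move, Player 0 produces every required
pair himself. A positional strategy `f`, by contrast, is beaten by Player 1 answering every move
with the single vertex `0`: the play then cycles through `0 :: f 0`, so it visits only finitely
many vertices and misses the pair `(n, n + 1)` for large `n`.
-/

namespace BMGame

variable {V : Type*}

@[simp]
lemma length_pref (ρ : ℕ → V) (n : ℕ) : (pref ρ n).length = n := by
  simp [pref]

lemma getElem_pref (ρ : ℕ → V) {n k : ℕ} (hk : k < (pref ρ n).length) :
    (pref ρ n)[k] = ρ k := by
  simp [pref]

lemma pref_add_length_eq_append_iff (ρ : ℕ → V) (a : ℕ) (l : List V) :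
    pref ρ (a + l.length) = pref ρ a ++ l ↔ ∀ j (hj : j < l.length), ρ (a + j) = l[j] := by
  constructor
  · intro h j hj
    have hj' : a + j < (pref ρ (a + l.length)).length := by simpa using hj
    have := List.getElem_of_eq h hj'
    rw [getElem_pref, List.getElem_append_right (by simp)] at this
    simpa using this
  · intro h
    refine List.ext_getElem (by simp) fun k hk _ => ?_
    rw [getElem_pref]
    rcases lt_or_ge k a with hka | hak
    · rw [List.getElem_append_left (by simpa using hka), getElem_pref]
    · rw [List.getElem_append_right (by simpa using hak)]
      simp only [length_pref]
      rw [← h (k - a) (by simp at hk; omega), Nat.add_sub_cancel' hak]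

/-- `d` is a junk default, never read when `l ≠ []`. -/
def cyclePlay (l : List V) (d : V) (k : ℕ) : V :=
  l.getD (k % l.length) d

lemma cyclePlay_mem {l : List V} (hl : l ≠ []) (d : V) (k : ℕ) : cyclePlay l d k ∈ l := by
  have hk : k % l.length < l.length := Nat.mod_lt _ (List.length_pos_iff.2 hl)
  rw [cyclePlay, List.getD_eq_getElem l d hk]
  exact List.getElem_mem _

lemma cyclePlay_add_mul (l : List V) (d : V) (j i : ℕ) :
    cyclePlay l d (j + i * l.length) = cyclePlay l d j := by
  simp [cyclePlay]

lemma consPositional_cyclePlay (f : V → List V) (v : V) :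
    ConsPositional f (cyclePlay (v :: f v) v) := by
  set m := (v :: f v).length
  have hstart : ∀ i, cyclePlay (v :: f v) v (i * m) = v := fun i => by
    rw [← zero_add (i * m), cyclePlay_add_mul]
    rfl
  refine ⟨fun i => i * m + 1, by simp, fun i => ?_⟩
  simp only [Nat.add_sub_cancel, hstart]
  constructor
  · rw [pref_add_length_eq_append_iff]
    intro j hj
    have hj' : j + 1 < m := by simp only [m, List.length_cons] at hj ⊢; omega
    rw [show i * m + 1 + j = (j + 1) + i * m by ring, cyclePlay_add_mul, cyclePlay,
      Nat.mod_eq_of_lt hj', List.getD_cons_succ, List.getD_eq_getElem]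
  · show i * m + 1 + (f v).length < (i + 1) * m + 1
    simp only [m, List.length_cons, add_one_mul]
    omega

end BMGame

lemma isChain_EN (l : List ℕ) : l.IsChain EN :=
  List.isChain_iff_getElem.2 fun _ _ => trivial

lemma not_mem_W19_of_le {ρ : ℕ → ℕ} {B : ℕ} (hB : ∀ k, ρ k ≤ B) : ρ ∉ W19 := fun hW => by
  obtain ⟨k, hk, -⟩ := hW (B + 1) (by omega)
  have := hB k
  omega

lemma moveCountingWinning_succ :
    MoveCountingWinning EN 0 W19 fun _ n => [n, n + 1] := by
  refine ⟨fun _ _ _ => ⟨List.cons_ne_nil _ _, isChain_EN _⟩, fun ρ _ ⟨c, _, hc⟩ n hn => ?_⟩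
  have hmove := (pref_add_length_eq_append_iff ρ _ _).1 (hc (n - 1)).1
  have h0 := hmove 0 (by simp)
  have h1 := hmove 1 (by simp)
  simp only [List.getElem_cons_zero, List.getElem_cons_succ, Nat.add_zero] at h0 h1
  exact ⟨c (n - 1), by omega, by omega⟩

lemma not_positionalWinning_W19 (f : ℕ → List ℕ) : ¬ PositionalWinning EN 0 W19 f := by
  rintro ⟨-, hwin⟩
  set ρ := cyclePlay (0 :: f 0) 0
  have hplay : IsPlay EN 0 ρ := ⟨rfl, fun _ => trivial⟩
  refine not_mem_W19_of_le (B := (0 :: f 0).sum) (fun k => ?_) (hwin ρ hplay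
    (consPositional_cyclePlay f 0))
  exact List.le_sum_of_mem (cyclePlay_mem (List.cons_ne_nil _ _) 0 k)

/-- On the infinite graph `G_ℕ`, in the game `(G_ℕ, 0, W19)` Player 0 has a bounded
move-counting winning strategy but no positional winning strategy. -/
theorem stmt19 :
    (∃ (h : ℕ → ℕ → List ℕ) (b : ℕ), 1 ≤ b ∧ MoveCountingWinning EN 0 W19 h ∧
        ∀ v n, 1 ≤ n → (h v n).length ≤ b) ∧
    ¬ ∃ f : ℕ → List ℕ, PositionalWinning EN 0 W19 f :=
  ⟨⟨_, 2, one_le_two, moveCountingWinning_succ, fun _ _ _ => le_rfl⟩,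
    fun ⟨f, hf⟩ => not_positionalWinning_W19 f hf⟩
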